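/- arXiv:1512.05570 — 5 statements merged into one kernel-verified Lean document; each statement's English description precedes it below -/
import Mathlib

section
/- Let E be a meet-semilattice with 0 and 1 and let Ê be its character space with the topology generated by the sets U_e = {φ : φ(e) = 1}. For an ideal I ⊆ E (a downward-closed subset containing 0), the union V_I := ⋃_{e ∈ I} U_e is open, and the map I ↦ V_I is an order isomorphism from the lattice of ideals of E onto the lattice of open subsets of Ê; its inverse sends an open subset V to {e ∈ E : U_e ⊆ V}. -/
/-- The character space of a meet-semilattice `E` with top and bottom:
maps `φ : E → {0,1}` with `φ(e ⊓ f) = φ(e)·φ(f)`, `φ(⊤) = 1`, `φ(⊥) = 0`. -/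
def SLChar (E : Type*) [SemilatticeInf E] [OrderTop E] [OrderBot E] :=
  {φ : E → Bool // (∀ e f : E, φ (e ⊓ f) = (φ e && φ f)) ∧ φ ⊤ = true ∧ φ ⊥ = false}

/-- The basic subset `U_e = {φ : φ(e) = 1}` of the character space. -/
def slU {E : Type*} [SemilatticeInf E] [OrderTop E] [OrderBot E] (e : E) :
    Set (SLChar E) :=
  {φ | φ.1 e = true}

/-- The topology on the character space generated by the sets `U_e`. -/
instance slTop (E : Type*) [SemilatticeInf E] [OrderTop E] [OrderBot E] :
    TopologicalSpace (SLChar E) :=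
  TopologicalSpace.generateFrom {V : Set (SLChar E) | ∃ e : E, V = slU e}

open Classical in
/-- The principal character associated to a nonbottom element `e`. -/
noncomputable def slPrinChar {E : Type*} [SemilatticeInf E] [OrderTop E] [OrderBot E]
    (e : E) (he : e ≠ ⊥) : SLChar E :=
  ⟨fun f => decide (e ≤ f), by
    refine ⟨fun g h => ?_, ?_, ?_⟩
    · simp [le_inf_iff, Bool.decide_and]
    · simp
    · simp [le_bot_iff, he]⟩

lemma slPrinChar_mem {E : Type*} [SemilatticeInf E] [OrderTop E] [OrderBot E]
    {e f : E} (he : e ≠ ⊥) : slPrinChar e he ∈ slU f ↔ e ≤ f := by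
  change (slPrinChar e he).1 f = true ↔ e ≤ f
  simp [slU, slPrinChar]

lemma slU_open {E : Type*} [SemilatticeInf E] [OrderTop E] [OrderBot E] (e : E) :
    IsOpen (slU e) :=
  TopologicalSpace.isOpen_generateFrom_of_mem ⟨e, rfl⟩

lemma slU_mono {E : Type*} [SemilatticeInf E] [OrderTop E] [OrderBot E]
    {e f : E} (h : e ≤ f) : slU e ⊆ slU f := by
  intro φ hφ
  have := φ.2.1 e f
  rw [inf_eq_left.mpr h] at this
  have h2 : φ.1 e = true := hφ
  rw [h2] at this
  show φ.1 f = true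
  simpa using this.symm

lemma slU_bot {E : Type*} [SemilatticeInf E] [OrderTop E] [OrderBot E] :
    slU (⊥ : E) = ∅ := by
  ext φ
  simp [slU, φ.2.2.2]

lemma slU_sub {E : Type*} [SemilatticeInf E] [OrderTop E] [OrderBot E]
    {e : E} {I : Set E} (hb : ⊥ ∈ I) (hl : IsLowerSet I)
    (h : slU e ⊆ ⋃ f ∈ I, slU f) : e ∈ I := by
  by_cases he : e = ⊥
  · exact he ▸ hb
  · have : slPrinChar e he ∈ ⋃ f ∈ I, slU f := h ((slPrinChar_mem he).mpr le_rfl)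
    obtain ⟨f, hf, hm⟩ := by simpa using this
    exact hl ((slPrinChar_mem he).mp hm) hf

lemma slU_cover {E : Type*} [SemilatticeInf E] [OrderTop E] [OrderBot E]
    {V : Set (SLChar E)} (hV : IsOpen V) {φ : SLChar E} (hφ : φ ∈ V) :
    ∃ e : E, φ ∈ slU e ∧ slU e ⊆ V := by
  induction hV with
  | basic s hs => obtain ⟨e, rfl⟩ := hs; exact ⟨e, hφ, subset_rfl⟩
  | univ => exact ⟨⊤, φ.2.2.1, Set.subset_univ _⟩
  | inter s t _ _ ihs iht =>
      obtain ⟨e, he, hes⟩ := ihs hφ.1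
      obtain ⟨f, hf, hft⟩ := iht hφ.2
      refine ⟨e ⊓ f, ?_, fun ψ hψ => ⟨hes (slU_mono inf_le_left hψ),
        hft (slU_mono inf_le_right hψ)⟩⟩
      show φ.1 (e ⊓ f) = true
      rw [φ.2.1]; simp [he, hf, slU] at *; simp [he, hf]
  | sUnion S _ ih =>
      obtain ⟨s, hs, hφs⟩ := hφ
      obtain ⟨e, he, hes⟩ := ih s hs hφs
      exact ⟨e, he, hes.trans (Set.subset_sUnion_of_mem hs)⟩

/-- The map `I ↦ V_I := ⋃_{e ∈ I} U_e` is an order isomorphism from the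
lattice of ideals of `E` onto the lattice of open subsets of the character
space, with inverse `V ↦ {e : U_e ⊆ V}`. -/
theorem stmt12 {E : Type*} [SemilatticeInf E] [OrderTop E] [OrderBot E] :
    (∀ I : Set E, ⊥ ∈ I → IsLowerSet I →
      IsOpen (⋃ e ∈ I, slU e) ∧ {e : E | slU e ⊆ ⋃ f ∈ I, slU f} = I) ∧
    (∀ V : Set (SLChar E), IsOpen V →
      ⊥ ∈ {e : E | slU e ⊆ V} ∧ IsLowerSet {e : E | slU e ⊆ V} ∧
        V = ⋃ e ∈ {e : E | slU e ⊆ V}, slU e) ∧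
    (∀ I J : Set E, ⊥ ∈ I → IsLowerSet I → ⊥ ∈ J → IsLowerSet J →
      (I ⊆ J ↔ (⋃ e ∈ I, slU e) ⊆ ⋃ e ∈ J, slU e)) := by
  refine ⟨fun I hb hl => ⟨isOpen_biUnion fun e _ => slU_open e, ?_⟩,
    fun V hV => ⟨?_, ?_, ?_⟩, fun I J hbI hlI hbJ hlJ => ⟨?_, ?_⟩⟩
  · ext e
    exact ⟨fun h => slU_sub hb hl h, fun h => Set.subset_biUnion_of_mem h⟩
  · show slU (⊥ : E) ⊆ V
    simp [slU_bot]
  · intro e f hfe he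
    exact (slU_mono hfe).trans he
  · ext φ
    constructor
    · intro hφ
      obtain ⟨e, he, hsub⟩ := slU_cover hV hφ
      exact Set.mem_biUnion hsub he
    · rintro hφ
      obtain ⟨e, he, hm⟩ := by simpa using hφ
      exact he hm
  · intro h
    exact Set.iUnion₂_subset fun e he => Set.subset_biUnion_of_mem (h he)
  · intro h e he
    exact slU_sub hbJ hlJ ((Set.subset_biUnion_of_mem he).trans h)
end

section
/- Let S be an inverse semigroup with zero and unit, E its idempotent semilattice, and Ê the character space with basic open sets U_e. For t ∈ S define c_t : U_{t*t} → U_{tt*} by c_t(φ)(e) = φ(t*·e·t). Then each c_t is a well-defined homeomorphism with inverse c_{t*}, and c_t ∘ c_u = c_{tu} as partial maps (with the composite defined exactly on c_u^{-1}(U_{u u*} ∩ U_{t*t})); thus t ↦ c_t is an action of S on Ê by partial homeomorphisms. -/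
/-- Idempotency in a multiplicative structure. -/
def isIdem {S : Type*} [Mul S] (e : S) : Prop := e * e = e

/-- A character of the idempotent semilattice of an inverse semigroup `S` with
zero `z` and unit, encoded as a function on all of `S` which is multiplicative
on idempotents, takes the value `1` at `1`, `0` at `z`, and (as a harmless
normalisation) `0` on non-idempotents. -/
def IsCharOn (S : Type*) [Monoid S] (z : S) (φ : S → Bool) : Prop :=
  (∀ e f : S, isIdem e → isIdem f → φ (e * f) = (φ e && φ f)) ∧
  φ 1 = true ∧ φ z = false ∧ ∀ s : S, ¬ isIdem s → φ s = false

/-- The character space `Ê` of the idempotent semilattice. -/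
def CharSp (S : Type*) [Monoid S] (z : S) := {φ : S → Bool // IsCharOn S z φ}

/-- The basic subset `U_e = {φ : φ(e) = 1}` of `Ê`. -/
def charU {S : Type*} [Monoid S] (z : S) (e : S) : Set (CharSp S z) :=
  {φ | φ.1 e = true}

/-- The topology on `Ê` generated by the sets `U_e` for idempotent `e`. -/
instance charSpTop (S : Type*) [Monoid S] (z : S) : TopologicalSpace (CharSp S z) :=
  TopologicalSpace.generateFrom {V : Set (CharSp S z) | ∃ e : S, isIdem e ∧ V = charU z e}

open Classical in
/-- The conjugation formula `c_t(φ)(e) = φ(t* e t)` (extended by `0` off the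
idempotents). -/
noncomputable def charConj {S : Type*} [Monoid S] (star : S → S) (t : S)
    (φ : S → Bool) : S → Bool :=
  fun s => if isIdem s then φ (star t * s * t) else false

set_option linter.unusedSectionVars false

section Aux
variable {S : Type*} [Monoid S] (star : S → S)
  (h1 : ∀ t : S, t * star t * t = t)
  (h2 : ∀ t : S, star t * t * star t = star t)
  (huniq : ∀ t s : S, t * s * t = t → s * t * s = s → s = star t)

include star h1 h2 huniq

theorem aux_star_star (t : S) : star (star t) = t :=
  (huniq (star t) t (h2 t) (h1 t)).symm

theorem aux_star_idem {e : S} (he : isIdem e) : star e = e := by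
  have he' : e * e = e := he
  exact (huniq e e (by rw [he', he']) (by rw [he', he'])).symm

theorem aux_idem_mul {e f : S} (he : isIdem e) (hf : isIdem f) : isIdem (e * f) := by
  have he' : e * e = e := he
  have hf' : f * f = f := hf
  have key : f * star (e * f) * e = star (e * f) := by
    apply huniq
    · calc e * f * (f * star (e * f) * e) * (e * f)
          = e * (f * f) * star (e * f) * (e * e) * f := by simp only [mul_assoc]
        _ = e * f * star (e * f) * (e * f) := by rw [hf', he']; simp only [mul_assoc]
        _ = e * f := h1 (e * f)
    · calc f * star (e * f) * e * (e * f) * (f * star (e * f) * e)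
          = f * star (e * f) * (e * e) * (f * f) * star (e * f) * e := by
            simp only [mul_assoc]
        _ = f * (star (e * f) * (e * f) * star (e * f)) * e := by
            rw [he', hf']; simp only [mul_assoc]
        _ = f * star (e * f) * e := by rw [h2 (e * f)]
  have hxx : star (e * f) * star (e * f) = star (e * f) := by
    calc star (e * f) * star (e * f)
        = f * star (e * f) * e * (f * star (e * f) * e) := by rw [key]
      _ = f * (star (e * f) * (e * f) * star (e * f)) * e := by simp only [mul_assoc]
      _ = f * star (e * f) * e := by rw [h2 (e * f)]
      _ = star (e * f) := key
  have hst : star (star (e * f)) = star (e * f) :=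
    aux_star_idem star h1 h2 huniq hxx
  have hef : e * f = star (e * f) := by
    conv_lhs => rw [← aux_star_star star h1 h2 huniq (e * f)]
    rw [hst]
  show e * f * (e * f) = e * f
  rw [hef, hxx]

theorem aux_idem_comm {e f : S} (he : isIdem e) (hf : isIdem f) : e * f = f * e := by
  have he' : e * e = e := he
  have hf' : f * f = f := hf
  have hef : e * f * (e * f) = e * f := aux_idem_mul star h1 h2 huniq he hf
  have hfe : f * e * (f * e) = f * e := aux_idem_mul star h1 h2 huniq hf he
  have key : f * e = star (e * f) := by
    apply huniq
    · calc e * f * (f * e) * (e * f)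
          = e * (f * f) * (e * e) * f := by simp only [mul_assoc]
        _ = e * f * (e * f) := by rw [hf', he']; simp only [mul_assoc]
        _ = e * f := hef
    · calc f * e * (e * f) * (f * e)
          = f * (e * e) * (f * f) * e := by simp only [mul_assoc]
        _ = f * e * (f * e) := by rw [he', hf']; simp only [mul_assoc]
        _ = f * e := hfe
  rw [key, aux_star_idem star h1 h2 huniq (aux_idem_mul star h1 h2 huniq he hf)]

theorem aux_tts (t : S) : isIdem (star t * t) := by
  show star t * t * (star t * t) = star t * t
  calc star t * t * (star t * t) = star t * t * star t * t := by simp only [mul_assoc]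
    _ = star t * t := by rw [h2 t]

theorem aux_tst (t : S) : isIdem (t * star t) := by
  show t * star t * (t * star t) = t * star t
  calc t * star t * (t * star t) = t * star t * t * star t := by simp only [mul_assoc]
    _ = t * star t := by rw [h1 t]

theorem aux_star_mul (t u : S) : star (t * u) = star u * star t := by
  have hcomm : u * star u * (star t * t) = star t * t * (u * star u) :=
    aux_idem_comm star h1 h2 huniq (aux_tst star h1 h2 huniq u) (aux_tts star h1 h2 huniq t)
  symm; apply huniq
  · calc t * u * (star u * star t) * (t * u)
        = t * (u * star u * (star t * t)) * u := by simp only [mul_assoc]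
      _ = t * (star t * t * (u * star u)) * u := by rw [hcomm]
      _ = t * star t * t * (u * star u * u) := by simp only [mul_assoc]
      _ = t * u := by rw [h1 t, h1 u]
  · calc star u * star t * (t * u) * (star u * star t)
        = star u * (star t * t * (u * star u)) * star t := by simp only [mul_assoc]
      _ = star u * (u * star u * (star t * t)) * star t := by rw [← hcomm]
      _ = star u * u * star u * (star t * t * star t) := by simp only [mul_assoc]
      _ = star u * star t := by rw [h2 u, h2 t]

theorem aux_conj_idem {e : S} (he : isIdem e) (t : S) : isIdem (star t * e * t) := by
  have he' : e * e = e := he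
  have hcomm : e * (t * star t) = t * star t * e :=
    aux_idem_comm star h1 h2 huniq he (aux_tst star h1 h2 huniq t)
  show star t * e * t * (star t * e * t) = star t * e * t
  calc star t * e * t * (star t * e * t)
      = star t * (e * (t * star t)) * (e * t) := by simp only [mul_assoc]
    _ = star t * (t * star t * e) * (e * t) := by rw [hcomm]
    _ = star t * t * star t * (e * e * t) := by simp only [mul_assoc]
    _ = star t * e * t := by rw [h2 t, he']; simp only [mul_assoc]

theorem aux_conj_mul {e f : S} (he : isIdem e) (hf : isIdem f) (t : S) :
    star t * e * t * (star t * f * t) = star t * (e * f) * t := by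
  have hcomm : t * star t * f = f * (t * star t) :=
    aux_idem_comm star h1 h2 huniq (aux_tst star h1 h2 huniq t) hf
  calc star t * e * t * (star t * f * t)
      = star t * e * (t * star t * f) * t := by simp only [mul_assoc]
    _ = star t * e * (f * (t * star t)) * t := by rw [hcomm]
    _ = star t * (e * f) * (t * star t * t) := by simp only [mul_assoc]
    _ = star t * (e * f) * t := by rw [h1 t]

theorem aux_sandwich {a s : S} (ha : isIdem a) (hs : isIdem s) : a * s * a = s * a := by
  have hcomm : a * s = s * a := aux_idem_comm star h1 h2 huniq ha hs
  have ha' : a * a = a := ha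
  rw [hcomm, mul_assoc, ha']

theorem aux_char (z : S) (hz : ∀ t : S, z * t = z ∧ t * z = z)
    {φ : S → Bool} (hφ : IsCharOn S z φ) {t : S}
    (ht : φ (star t * t) = true) : IsCharOn S z (charConj star t φ) := by
  obtain ⟨hmul, hone, hzero, hnon⟩ := hφ
  refine ⟨?_, ?_, ?_, ?_⟩
  · intro e f he hf
    have hef : isIdem (e * f) := aux_idem_mul star h1 h2 huniq he hf
    simp only [charConj, if_pos he, if_pos hf, if_pos hef]
    rw [← aux_conj_mul star h1 h2 huniq he hf t]
    exact hmul _ _ (aux_conj_idem star h1 h2 huniq he t) (aux_conj_idem star h1 h2 huniq hf t)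
  · have hone' : isIdem (1 : S) := one_mul 1
    simp only [charConj, if_pos hone', mul_one]
    exact ht
  · have hzid : isIdem z := (hz z).1
    simp only [charConj, if_pos hzid]
    rw [(hz (star t)).2, (hz t).1]
    exact hzero
  · intro s hs
    simp only [charConj, if_neg hs]

/-- The action map. -/
noncomputable def Fmap (z : S) (hz : ∀ t : S, z * t = z ∧ t * z = z)
    (t : S) (φ : CharSp S z) : CharSp S z :=
  if h : φ.1 (star t * t) = true then
    ⟨charConj star t φ.1, aux_char star h1 h2 huniq z hz φ.2 h⟩
  else φ

theorem Fmap_val (z : S) (hz : ∀ t : S, z * t = z ∧ t * z = z)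
    (t : S) (φ : CharSp S z) (h : φ.1 (star t * t) = true) :
    (Fmap star h1 h2 huniq z hz t φ).1 = charConj star t φ.1 := by
  rw [Fmap]
  exact congrArg (fun x : CharSp S z => x.1) (dif_pos h)

end Aux

/-- The maps `c_t : U_{t*t} → U_{tt*}`, `c_t(φ)(e) = φ(t* e t)`, are
well-defined homeomorphisms with inverse `c_{t*}`, and `c_t ∘ c_u = c_{tu}`
as partial maps (with the composite defined exactly on
`c_u⁻¹(U_{uu*} ∩ U_{t*t}) = U_{(tu)*(tu)}`); thus `t ↦ c_t` is an action of
`S` on `Ê` by partial homeomorphisms. -/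
theorem stmt13 {S : Type*} [Monoid S] (star : S → S)
    (h1 : ∀ t : S, t * star t * t = t)
    (h2 : ∀ t : S, star t * t * star t = star t)
    (huniq : ∀ t s : S, t * s * t = t → s * t * s = s → s = star t)
    (z : S) (hz : ∀ t : S, z * t = z ∧ t * z = z) :
    ∃ F : S → CharSp S z → CharSp S z,
      ∀ t : S,
        (∀ φ : CharSp S z, φ ∈ charU z (star t * t) →
          (F t φ).1 = charConj star t φ.1) ∧
        Set.MapsTo (F t) (charU z (star t * t)) (charU z (t * star t)) ∧
        (∀ φ ∈ charU z (star t * t), F (star t) (F t φ) = φ) ∧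
        IsOpen (charU z (star t * t)) ∧
        ContinuousOn (F t) (charU z (star t * t)) ∧
        (∀ u : S,
          charU z (star (t * u) * (t * u)) =
            {φ : CharSp S z | φ ∈ charU z (star u * u) ∧
              F u φ ∈ charU z (star t * t)} ∧
          ∀ φ ∈ charU z (star (t * u) * (t * u)), F t (F u φ) = F (t * u) φ) := by
  classical
  set F := Fmap star h1 h2 huniq z hz with hF
  have hval : ∀ (t : S) (φ : CharSp S z), φ.1 (star t * t) = true →
      (F t φ).1 = charConj star t φ.1 := fun t φ h =>
    Fmap_val star h1 h2 huniq z hz t φ h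
  -- MapsTo, stated pointwise
  have hmaps : ∀ (t : S) (φ : CharSp S z), φ.1 (star t * t) = true →
      (F t φ).1 (t * star t) = true := by
    intro t φ h
    rw [hval t φ h]
    show (if isIdem (t * star t) then φ.1 (star t * (t * star t) * t) else false) = true
    rw [if_pos (aux_tst star h1 h2 huniq t)]
    have he : star t * (t * star t) * t = star t * t := by
      calc star t * (t * star t) * t = star t * t * (star t * t) := by simp only [mul_assoc]
        _ = star t * t := aux_tts star h1 h2 huniq t
    rw [he]; exact h
  refine ⟨F, fun t => ⟨fun φ hφ => hval t φ hφ, fun φ hφ => hmaps t φ hφ, ?_, ?_, ?_, ?_⟩⟩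
  · -- inverse
    intro φ hφ
    have hφ' : φ.1 (star t * t) = true := hφ
    have hmem2 : (F t φ).1 (star (star t) * star t) = true := by
      rw [aux_star_star star h1 h2 huniq t]
      exact hmaps t φ hφ'
    apply Subtype.ext
    rw [hval (star t) (F t φ) hmem2, hval t φ hφ']
    funext s
    by_cases hs : isIdem s
    · have hsi : isIdem (t * s * star t) := by
        have := aux_conj_idem star h1 h2 huniq hs (star t)
        rwa [aux_star_star star h1 h2 huniq t] at this
      show (if isIdem s then
          charConj star t φ.1 (star (star t) * s * star t) else false) = φ.1 s
      rw [if_pos hs, aux_star_star star h1 h2 huniq t]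
      show (if isIdem (t * s * star t) then
          φ.1 (star t * (t * s * star t) * t) else false) = φ.1 s
      rw [if_pos hsi]
      have key : star t * (t * s * star t) * t = s * (star t * t) := by
        calc star t * (t * s * star t) * t
            = star t * t * s * (star t * t) := by simp only [mul_assoc]
          _ = s * (star t * t) := aux_sandwich star h1 h2 huniq
              (aux_tts star h1 h2 huniq t) hs
      rw [key, φ.2.1 s (star t * t) hs (aux_tts star h1 h2 huniq t), hφ',
        Bool.and_true]
    · show (if isIdem s then
          charConj star t φ.1 (star (star t) * s * star t) else false) = φ.1 s
      rw [if_neg hs, (φ.2.2.2.2 s hs)]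
  · -- open
    exact TopologicalSpace.GenerateOpen.basic _
      ⟨star t * t, aux_tts star h1 h2 huniq t, rfl⟩
  · -- continuity
    rw [continuousOn_iff_continuous_restrict]
    apply continuous_generateFrom_iff.mpr
    rintro V ⟨e, he, rfl⟩
    have hpre : (charU z (star t * t)).domRestrict (F t) ⁻¹' (charU z e) =
        Subtype.val ⁻¹' (charU z (star t * e * t)) := by
      ext x
      show (F t x.1).1 e = true ↔ x.1.1 (star t * e * t) = true
      rw [hval t x.1 x.2]
      show (if isIdem e then x.1.1 (star t * e * t) else false) = true ↔ _
      rw [if_pos he]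
    rw [hpre]
    have hopen : IsOpen (charU z (star t * e * t)) :=
      TopologicalSpace.GenerateOpen.basic _
        ⟨star t * e * t, aux_conj_idem star h1 h2 huniq he t, rfl⟩
    exact hopen.preimage continuous_subtype_val
  · -- cocycle
    intro u
    have hA1 : star (t * u) * (t * u) = star u * (star t * t) * u := by
      rw [aux_star_mul star h1 h2 huniq t u]; simp only [mul_assoc]
    have hAidem : isIdem (star u * (star t * t) * u) :=
      aux_conj_idem star h1 h2 huniq (aux_tts star h1 h2 huniq t) u
    have hseteq : charU z (star (t * u) * (t * u)) =
        {φ : CharSp S z | φ ∈ charU z (star u * u) ∧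
          F u φ ∈ charU z (star t * t)} := by
      ext φ
      show φ.1 (star (t * u) * (t * u)) = true ↔
        φ.1 (star u * u) = true ∧ (F u φ).1 (star t * t) = true
      rw [hA1]
      constructor
      · intro hA
        have huu : φ.1 (star u * u) = true := by
          have prod : (star u * (star t * t) * u) * (star u * u) =
              star u * (star t * t) * u := by
            calc (star u * (star t * t) * u) * (star u * u)
                = star u * (star t * t) * (u * star u * u) := by simp only [mul_assoc]
              _ = star u * (star t * t) * u := by rw [h1 u]
          have hm := φ.2.1 _ _ hAidem (aux_tts star h1 h2 huniq u)
          rw [prod, hA] at hm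
          simpa using hm.symm
        refine ⟨huu, ?_⟩
        rw [hval u φ huu]
        show (if isIdem (star t * t) then
            φ.1 (star u * (star t * t) * u) else false) = true
        rw [if_pos (aux_tts star h1 h2 huniq t)]
        exact hA
      · rintro ⟨huu, hFu⟩
        rw [hval u φ huu] at hFu
        have : (if isIdem (star t * t) then
            φ.1 (star u * (star t * t) * u) else false) = true := hFu
        rwa [if_pos (aux_tts star h1 h2 huniq t)] at this
    refine ⟨hseteq, ?_⟩
    intro φ hφ
    have htu : φ.1 (star (t * u) * (t * u)) = true := hφ
    rw [hseteq] at hφ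
    simp only [Set.mem_setOf_eq] at hφ
    obtain ⟨huu, hFu⟩ := hφ
    have huu' : φ.1 (star u * u) = true := huu
    have hFu' : (F u φ).1 (star t * t) = true := hFu
    apply Subtype.ext
    rw [hval t (F u φ) hFu', hval (t * u) φ htu, hval u φ huu']
    funext s
    by_cases hs : isIdem s
    · have hsi : isIdem (star t * s * t) := aux_conj_idem star h1 h2 huniq hs t
      show (if isIdem s then
          charConj star u φ.1 (star t * s * t) else false) =
        (if isIdem s then φ.1 (star (t * u) * s * (t * u)) else false)
      rw [if_pos hs]
      show (if isIdem (star t * s * t) then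
          φ.1 (star u * (star t * s * t) * u) else false) = _
      rw [if_pos hsi]
      have key : star u * (star t * s * t) * u = star (t * u) * s * (t * u) := by
        rw [aux_star_mul star h1 h2 huniq t u]; simp only [mul_assoc]
      rw [key, if_pos hs]
    · show (if isIdem s then
          charConj star u φ.1 (star t * s * t) else false) =
        (if isIdem s then φ.1 (star (t * u) * s * (t * u)) else false)
      rw [if_neg hs, if_neg hs]
end

section
/- Let S be an inverse semigroup with zero and unit, E its idempotents, and Ê its character space with basic open sets U_e. For t ∈ S let L_t = {e ∈ E : e ≤ t} and L_t^⊥ = {f ∈ E : f ≤ t*t and e·f = 0 for all e ∈ L_t}. Then for f ∈ E with f ≤ t*t, the set U_f is disjoint from ⋃_{e ∈ L_t} U_e if and only if f ∈ L_t^⊥. Moreover, ⋃_{e ∈ L_t ∪ L_t^⊥} U_e = U_{t*t} holds if and only if t*t ∈ L_t ∪ L_t^⊥, i.e., if and only if t is idempotent or e ≤ 1, e ≤ t implies e = 0. -/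
/-- `L_t`: the idempotents `e ≤ t` (equivalently, `e` idempotent with `t·e = e`). -/
def Lset {S : Type*} [Monoid S] (t : S) : Set S := {e : S | isIdem e ∧ t * e = e}

/-- `L_t^⊥`: the idempotents `f ≤ t*t` with `e·f = 0` for all `e ∈ L_t`. -/
def LsetPerp {S : Type*} [Monoid S] (star : S → S) (z t : S) : Set S :=
  {g : S | isIdem g ∧ star t * t * g = g ∧ ∀ e ∈ Lset t, e * g = z}

namespace Stmt14
variable {S : Type*} [Monoid S]

lemma star_star (st : S → S)
    (h1 : ∀ t : S, t * st t * t = t) (h2 : ∀ t : S, st t * t * st t = st t)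
    (huniq : ∀ t s : S, t * s * t = t → s * t * s = s → s = st t)
    (t : S) : st (st t) = t :=
  (huniq (st t) t (h2 t) (h1 t)).symm

lemma star_idem (st : S → S)
    (huniq : ∀ t s : S, t * s * t = t → s * t * s = s → s = st t)
    {e : S} (he : isIdem e) : st e = e :=
  (huniq e e (by rw [he, he]) (by rw [he, he])).symm

lemma idem_absorb {f : S} (hf : isIdem f) (x : S) : f * (f * x) = f * x := by
  rw [← mul_assoc, hf]

lemma idem_comm (st : S → S)
    (h1 : ∀ t : S, t * st t * t = t) (h2 : ∀ t : S, st t * t * st t = st t)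
    (huniq : ∀ t s : S, t * s * t = t → s * t * s = s → s = st t)
    {e f : S} (he : isIdem e) (hf : isIdem f) : e * f = f * e := by
  have sandwich : ∀ a b : S, isIdem a → isIdem b → isIdem (st (a * b)) ∧
      b * st (a * b) * a = st (a * b) := by
    intro a b ha hb
    set s := st (a * b) with hs
    have hmid : s * (a * b) * s = s := h2 (a * b)
    have key1 : (a * b) * (b * s * a) * (a * b) = a * b := by
      calc (a * b) * (b * s * a) * (a * b)
          = a * (b * (b * (s * (a * (a * b))))) := by simp only [mul_assoc]
        _ = a * (b * (s * (a * (a * b)))) := by rw [idem_absorb hb]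
        _ = a * (b * (s * (a * b))) := by rw [idem_absorb ha]
        _ = a * b * s * (a * b) := by simp only [mul_assoc]
        _ = a * b := h1 (a * b)
    have key2 : (b * s * a) * (a * b) * (b * s * a) = b * s * a := by
      calc (b * s * a) * (a * b) * (b * s * a)
          = b * (s * (a * (a * (b * (b * (s * a)))))) := by simp only [mul_assoc]
        _ = b * (s * (a * (b * (b * (s * a))))) := by rw [idem_absorb ha]
        _ = b * (s * (a * (b * (s * a)))) := by rw [idem_absorb hb]
        _ = b * ((s * (a * b) * s) * a) := by simp only [mul_assoc]
        _ = b * (s * a) := by rw [hmid]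
        _ = b * s * a := by rw [mul_assoc]
    have hbsa : b * s * a = s := huniq (a * b) (b * s * a) key1 key2
    refine ⟨?_, hbsa⟩
    show s * s = s
    conv_lhs => rw [← hbsa]
    calc (b * s * a) * (b * s * a)
        = b * ((s * (a * b) * s) * a) := by simp only [mul_assoc]
      _ = b * (s * a) := by rw [hmid]
      _ = b * s * a := by rw [mul_assoc]
      _ = s := hbsa
  have hsidem' : isIdem (st (e * f)) := (sandwich e f he hf).1
  have hef : isIdem (e * f) := by
    have h := star_idem st huniq hsidem'
    rw [star_star st h1 h2 huniq] at h
    rw [h]; exact hsidem'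
  have hfe : isIdem (f * e) := by
    have hsidem2 : isIdem (st (f * e)) := (sandwich f e hf he).1
    have h := star_idem st huniq hsidem2
    rw [star_star st h1 h2 huniq] at h
    rw [h]; exact hsidem2
  have k1 : (e * f) * (f * e) * (e * f) = e * f := by
    calc (e * f) * (f * e) * (e * f)
        = e * (f * (f * (e * (e * f)))) := by simp only [mul_assoc]
      _ = e * (f * (e * (e * f))) := by rw [idem_absorb hf]
      _ = e * (f * (e * f)) := by rw [idem_absorb he]
      _ = (e * f) * (e * f) := by simp only [mul_assoc]
      _ = e * f := hef
  have k2 : (f * e) * (e * f) * (f * e) = f * e := by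
    calc (f * e) * (e * f) * (f * e)
        = f * (e * (e * (f * (f * e)))) := by simp only [mul_assoc]
      _ = f * (e * (f * (f * e))) := by rw [idem_absorb he]
      _ = f * (e * (f * e)) := by rw [idem_absorb hf]
      _ = (f * e) * (f * e) := by simp only [mul_assoc]
      _ = f * e := hfe
  have := huniq (e * f) (f * e) k1 k2
  rw [this, star_idem st huniq hef]

end Stmt14

namespace Stmt14
variable {S : Type*} [Monoid S]

lemma idem_mul (st : S → S)
    (h1 : ∀ t : S, t * st t * t = t) (h2 : ∀ t : S, st t * t * st t = st t)
    (huniq : ∀ t s : S, t * s * t = t → s * t * s = s → s = st t)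
    {e f : S} (he : isIdem e) (hf : isIdem f) : isIdem (e * f) := by
  show (e * f) * (e * f) = e * f
  calc (e * f) * (e * f) = e * ((f * e) * f) := by simp only [mul_assoc]
    _ = e * ((e * f) * f) := by rw [idem_comm st h1 h2 huniq he hf]
    _ = (e * e) * (f * f) := by simp only [mul_assoc]
    _ = e * f := by rw [he, hf]

lemma idem_stt (st : S → S) (h2 : ∀ t : S, st t * t * st t = st t) (t : S) :
    isIdem (st t * t) := by
  show (st t * t) * (st t * t) = st t * t
  calc (st t * t) * (st t * t) = (st t * t * st t) * t := by simp only [mul_assoc]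
    _ = st t * t := by rw [h2]

lemma star_mul (st : S → S)
    (h1 : ∀ t : S, t * st t * t = t) (h2 : ∀ t : S, st t * t * st t = st t)
    (huniq : ∀ t s : S, t * s * t = t → s * t * s = s → s = st t)
    (a b : S) : st (a * b) = st b * st a := by
  have hb1 : isIdem (b * st b) := by
    show (b * st b) * (b * st b) = b * st b
    calc (b * st b) * (b * st b) = b * (st b * b * st b) := by simp only [mul_assoc]
      _ = b * st b := by rw [h2]
  have ha1 : isIdem (st a * a) := idem_stt st h2 a
  have k1 : (a * b) * (st b * st a) * (a * b) = a * b := by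
    calc (a * b) * (st b * st a) * (a * b)
        = a * ((b * st b) * (st a * a)) * b := by simp only [mul_assoc]
      _ = a * ((st a * a) * (b * st b)) * b := by
          rw [idem_comm st h1 h2 huniq hb1 ha1]
      _ = (a * st a * a) * (b * st b * b) := by simp only [mul_assoc]
      _ = a * b := by rw [h1, h1]
  have k2 : (st b * st a) * (a * b) * (st b * st a) = st b * st a := by
    calc (st b * st a) * (a * b) * (st b * st a)
        = st b * ((st a * a) * (b * st b)) * st a := by simp only [mul_assoc]
      _ = st b * ((b * st b) * (st a * a)) * st a := by
          rw [idem_comm st h1 h2 huniq ha1 hb1]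
      _ = (st b * b * st b) * (st a * a * st a) := by simp only [mul_assoc]
      _ = st b * st a := by rw [h2, h2]
  exact (huniq (a * b) (st b * st a) k1 k2).symm

/-- If `e` is idempotent and `t * e = e` then `st t * t * e = e`. -/
lemma le_stt (st : S → S)
    (h1 : ∀ t : S, t * st t * t = t) (h2 : ∀ t : S, st t * t * st t = st t)
    (huniq : ∀ t s : S, t * s * t = t → s * t * s = s → s = st t)
    {t e : S} (he : isIdem e) (hle : t * e = e) : st t * t * e = e := by
  have hst : e * st t = e := by
    have h := star_mul st h1 h2 huniq t e
    rw [hle, star_idem st huniq he] at h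
    exact h.symm
  have key : e = e * (st t * t) * e := by
    conv_lhs => rw [← he]
    conv_lhs => rw [show e * e = (e * st t) * (t * e) by rw [hst, hle]]
    simp only [mul_assoc]
  have hcomm : e * (st t * t) = (st t * t) * e :=
    idem_comm st h1 h2 huniq he (idem_stt st h2 t)
  calc st t * t * e = st t * t * (e * e) := by rw [he]
    _ = ((st t * t) * e) * e := by simp only [mul_assoc]
    _ = (e * (st t * t)) * e := by rw [hcomm]
    _ = e := key.symm

/-- The principal character determined by an idempotent `a`. -/
noncomputable def phi (a : S) : S → Bool :=
  fun s => @decide (isIdem s ∧ s * a = a) (Classical.propDecidable _)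

lemma phi_spec (a s : S) : phi a s = true ↔ (isIdem s ∧ s * a = a) := by
  unfold phi; exact @decide_eq_true_iff _ (Classical.propDecidable _)

lemma phi_char (st : S → S)
    (h1 : ∀ t : S, t * st t * t = t) (h2 : ∀ t : S, st t * t * st t = st t)
    (huniq : ∀ t s : S, t * s * t = t → s * t * s = s → s = st t)
    (z : S) (hz : ∀ t : S, z * t = z ∧ t * z = z)
    {a : S} (ha : isIdem a) (haz : a ≠ z) : IsCharOn S z (phi a) := by
  refine ⟨?_, ?_, ?_, ?_⟩
  · intro e f he hf
    rw [Bool.eq_iff_iff, Bool.and_eq_true, phi_spec, phi_spec, phi_spec]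
    have hef : isIdem (e * f) := idem_mul st h1 h2 huniq he hf
    constructor
    · rintro ⟨-, hefa⟩
      refine ⟨⟨he, ?_⟩, ⟨hf, ?_⟩⟩
      · calc e * a = e * ((e * f) * a) := by rw [hefa]
          _ = ((e * e) * f) * a := by simp only [mul_assoc]
          _ = a := by rw [he, hefa]
      · calc f * a = f * ((e * f) * a) := by rw [hefa]
          _ = ((f * e) * f) * a := by simp only [mul_assoc]
          _ = ((e * f) * f) * a := by rw [idem_comm st h1 h2 huniq he hf]
          _ = (e * (f * f)) * a := by simp only [mul_assoc]
          _ = a := by rw [hf, hefa]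
    · rintro ⟨⟨-, hea⟩, ⟨-, hfa⟩⟩
      exact ⟨hef, by rw [mul_assoc, hfa, hea]⟩
  · rw [phi_spec]
    exact ⟨by show (1 : S) * 1 = 1; rw [mul_one], by rw [one_mul]⟩
  · rw [Bool.eq_false_iff]
    intro h
    rw [phi_spec] at h
    exact haz (by rw [← h.2, (hz a).1])
  · intro s hs
    rw [Bool.eq_false_iff]
    intro h
    exact hs ((phi_spec a s).1 h).1

end Stmt14

/-- For `f ≤ t*t` idempotent, `U_f` is disjoint from `⋃_{e ∈ L_t} U_e` iff
`f ∈ L_t^⊥`; and `⋃_{e ∈ L_t ∪ L_t^⊥} U_e = U_{t*t}` iff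
`t*t ∈ L_t ∪ L_t^⊥`, iff `t` is idempotent or every idempotent `e ≤ t`
vanishes. -/
theorem stmt14 {S : Type*} [Monoid S] (star : S → S)
    (h1 : ∀ t : S, t * star t * t = t)
    (h2 : ∀ t : S, star t * t * star t = star t)
    (huniq : ∀ t s : S, t * s * t = t → s * t * s = s → s = star t)
    (z : S) (hz : ∀ t : S, z * t = z ∧ t * z = z) (t : S) :
    (∀ f : S, isIdem f → star t * t * f = f →
      ((charU z f ∩ ⋃ e ∈ Lset t, charU z e) = ∅ ↔ f ∈ LsetPerp star z t)) ∧
    ((⋃ e ∈ Lset t ∪ LsetPerp star z t, charU z e) = charU z (star t * t) ↔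
      star t * t ∈ Lset t ∪ LsetPerp star z t) ∧
    (star t * t ∈ Lset t ∪ LsetPerp star z t ↔
      (isIdem t ∨ ∀ e : S, isIdem e → t * e = e → e = z)) := by
  open Stmt14 in
  have haI : isIdem (star t * t) := idem_stt star h2 t
  have hcomm : ∀ {e f : S}, isIdem e → isIdem f → e * f = f * e :=
    fun he hf => Stmt14.idem_comm star h1 h2 huniq he hf
  have hle : ∀ {e : S}, isIdem e → t * e = e → star t * t * e = e :=
    fun he hte => Stmt14.le_stt star h1 h2 huniq he hte
  refine ⟨?_, ?_, ?_⟩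
  · -- Part 1
    intro f hfI hfle
    constructor
    · intro hdisj
      refine ⟨hfI, hfle, fun e he => ?_⟩
      by_contra hne
      have hefI : isIdem (e * f) := Stmt14.idem_mul star h1 h2 huniq he.1 hfI
      set φ : CharSp S z :=
        ⟨Stmt14.phi (e * f), Stmt14.phi_char star h1 h2 huniq z hz hefI hne⟩ with hφ
      have hφf : φ ∈ charU z f := by
        show Stmt14.phi (e * f) f = true
        rw [Stmt14.phi_spec]
        refine ⟨hfI, ?_⟩
        calc f * (e * f) = (f * e) * f := by rw [mul_assoc]
          _ = (e * f) * f := by rw [hcomm he.1 hfI]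
          _ = e * (f * f) := by rw [mul_assoc]
          _ = e * f := by rw [hfI]
      have hφe : φ ∈ charU z e := by
        show Stmt14.phi (e * f) e = true
        rw [Stmt14.phi_spec]
        exact ⟨he.1, by rw [← mul_assoc, he.1]⟩
      rw [Set.eq_empty_iff_forall_notMem] at hdisj
      exact hdisj φ ⟨hφf, Set.mem_biUnion he hφe⟩
    · rintro ⟨-, -, hperp⟩
      rw [Set.eq_empty_iff_forall_notMem]
      rintro φ ⟨hφf, hφU⟩
      obtain ⟨e, he, hφe⟩ := Set.mem_iUnion₂.1 hφU
      have hφe' : φ.1 e = true := hφe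
      have hφf' : φ.1 f = true := hφf
      have hmul := φ.2.1 e f he.1 hfI
      rw [hperp e he, φ.2.2.2.1, hφe', hφf'] at hmul
      simp at hmul
  · -- Part 2
    constructor
    · intro hU
      by_contra hmem
      have haz : star t * t ≠ z := by
        intro h0
        exact hmem (Or.inr ⟨haI, haI, fun e he => by rw [h0]; exact (hz e).2⟩)
      set φ : CharSp S z :=
        ⟨Stmt14.phi (star t * t), Stmt14.phi_char star h1 h2 huniq z hz haI haz⟩ with hφ
      have hφa : φ ∈ charU z (star t * t) := by
        show Stmt14.phi (star t * t) (star t * t) = true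
        rw [Stmt14.phi_spec]
        exact ⟨haI, haI⟩
      rw [← hU] at hφa
      obtain ⟨e, he, hφe⟩ := Set.mem_iUnion₂.1 hφa
      have hφe' : Stmt14.phi (star t * t) e = true := hφe
      rw [Stmt14.phi_spec] at hφe'
      have heI : isIdem e := hφe'.1
      have h1e : e * (star t * t) = star t * t := hφe'.2
      have h2e : star t * t * e = e := by
        cases he with
        | inl hL => exact hle hL.1 hL.2
        | inr hP => exact hP.2.1
      have heq : e = star t * t := by
        calc e = star t * t * e := h2e.symm
          _ = e * (star t * t) := (hcomm heI haI).symm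
          _ = star t * t := h1e
      rw [heq] at he
      exact hmem he
    · intro hmem
      apply Set.Subset.antisymm
      · intro φ hφ
        obtain ⟨e, he, hφe⟩ := Set.mem_iUnion₂.1 hφ
        have hφe' : φ.1 e = true := hφe
        have heI : isIdem e := by
          cases he with
          | inl hL => exact hL.1
          | inr hP => exact hP.1
        have h2e : star t * t * e = e := by
          cases he with
          | inl hL => exact hle hL.1 hL.2
          | inr hP => exact hP.2.1
        show φ.1 (star t * t) = true
        have hmul := φ.2.1 (star t * t) e haI heI
        rw [h2e, hφe', Bool.and_true] at hmul
        exact hmul.symm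
      · intro φ hφ
        exact Set.mem_biUnion hmem hφ
  · -- Part 3
    rw [Set.mem_union]
    have hL : star t * t ∈ Lset t ↔ isIdem t := by
      constructor
      · rintro ⟨-, hta⟩
        have ht : t = star t * t := by rw [← hta, ← mul_assoc, h1]
        rw [ht]; exact haI
      · intro ht
        have hst : star t = t := Stmt14.star_idem star huniq ht
        refine ⟨haI, ?_⟩
        rw [hst, ht]; exact ht
    have hP : star t * t ∈ LsetPerp star z t ↔
        ∀ e : S, isIdem e → t * e = e → e = z := by
      constructor
      · rintro ⟨-, -, hp⟩ e heI hte
        have h := hp e ⟨heI, hte⟩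
        rwa [hcomm heI haI, hle heI hte] at h
      · intro h
        refine ⟨haI, haI, fun e he => ?_⟩
        rw [h e he.1 he.2]; exact (hz _).1
    rw [hL, hP]
end

section
/- Let S be an inverse semigroup with zero and unit, acting on its character space Ê as above, with transformation groupoid Ê ⋊ S (arrows are classes [t,φ] with φ ∈ U_{t*t}, where [t,φ] = [u,φ] iff there is an idempotent e with φ(e)=1 and t·e = u·e). The unit space (the set of arrows [1,φ]) is closed in the arrow space of Ê ⋊ S if and only if S is E*-unitary (i.e., e idempotent, e ≠ 0, e ≤ t implies t idempotent). -/
/-- Pairs `(t, φ)` with `φ ∈ U_{t*t}`, representing germs of the universal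
action; the arrow space of `Ê ⋊ S` is a quotient of this space. -/
def GermT (S : Type*) [Monoid S] (star : S → S) (z : S) :=
  {p : S × CharSp S z // p.2.1 (star p.1 * p.1) = true}

/-- `(t, φ) ∼ (u, φ)` iff `t e = u e` for some idempotent `e` with `φ(e) = 1`. -/
def germRel (S : Type*) [Monoid S] (star : S → S) (z : S) :
    GermT S star z → GermT S star z → Prop :=
  fun p q => p.1.2 = q.1.2 ∧
    ∃ e : S, isIdem e ∧ p.1.2.1 e = true ∧ p.1.1 * e = q.1.1 * e

/-- The arrow space of the transformation groupoid `Ê ⋊ S`. -/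
def GermSp (S : Type*) [Monoid S] (star : S → S) (z : S) := Quot (germRel S star z)

instance germTTop (S : Type*) [Monoid S] (star : S → S) (z : S) :
    TopologicalSpace (GermT S star z) := by
  letI : TopologicalSpace S := ⊥
  exact TopologicalSpace.induced Subtype.val inferInstance

/-- The quotient topology on `Ê ⋊ S`; it is the unique topology for which each
bisection `[t] = {[t,φ]}` is open and homeomorphic to `U_{t*t}`. -/
instance germSpTop (S : Type*) [Monoid S] (star : S → S) (z : S) :
    TopologicalSpace (GermSp S star z) :=
  TopologicalSpace.coinduced (Quot.mk (germRel S star z)) inferInstance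

/-- The set of units `[1, φ]` of `Ê ⋊ S`. -/
def unitGerms (S : Type*) [Monoid S] (star : S → S) (z : S) : Set (GermSp S star z) :=
  {x | ∃ p : GermT S star z, p.1.1 = 1 ∧ x = Quot.mk (germRel S star z) p}

section auxlem
variable {S : Type*} [Monoid S] (star : S → S)

theorem myStarIdem (huniq : ∀ t s : S, t * s * t = t → s * t * s = s → s = star t)
    {e : S} (he : isIdem e) : star e = e :=
  (huniq e e (by rw [he, he]) (by rw [he, he])).symm

theorem myIdemMul
    (h1 : ∀ t : S, t * star t * t = t)
    (h2 : ∀ t : S, star t * t * star t = star t)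
    (huniq : ∀ t s : S, t * s * t = t → s * t * s = s → s = star t)
    {e f : S} (he : isIdem e) (hf : isIdem f) : isIdem (e * f) := by
  have he2 : ∀ a : S, a * e * e = a * e := fun a => by rw [mul_assoc, he]
  have hf2 : ∀ a : S, a * f * f = a * f := fun a => by rw [mul_assoc, hf]
  obtain ⟨x, hx⟩ : ∃ x, x = star (e * f) := ⟨_, rfl⟩
  have h1l : e * f * x * e * f = e * f := by
    have := h1 (e * f); rw [← hx] at this; simpa [← mul_assoc] using this
  have h2l : x * e * f * x = x := by
    have := h2 (e * f); rw [← hx] at this; simpa [← mul_assoc] using this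
  have hxg : ∀ a : S, a * x * e * f * x = a * x := fun a => by
    calc a * x * e * f * x = a * (x * (e * (f * x))) := by simp only [mul_assoc]
      _ = a * (x * e * f * x) := by simp only [← mul_assoc]
      _ = a * x := by rw [h2l]
  have hA : (e*f) * (f*x*e) * (e*f) = e*f := by
    have : (e*f) * (f*x*e) * (e*f) = e*f*f*x*e*e*f := by simp only [← mul_assoc]
    rw [this, hf2, he2, h1l]
  have hB : (f*x*e) * (e*f) * (f*x*e) = f*x*e := by
    have : (f*x*e) * (e*f) * (f*x*e) = f*x*e*e*f*f*x*e := by simp only [← mul_assoc]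
    rw [this, he2, hf2, hxg]
  have hfxe : f*x*e = x := by rw [huniq (e*f) (f*x*e) hA hB, ← hx]
  have hxidem : isIdem x := by
    show x * x = x
    conv_lhs => rw [← hfxe]
    have : (f*x*e) * (f*x*e) = f*x*e*f*x*e := by simp only [← mul_assoc]
    rw [this, hxg]; exact hfxe
  have h3 : x * (e*f) * x = x := by have := h2 (e*f); rwa [← hx] at this
  have h4 : (e*f) * x * (e*f) = e*f := by have := h1 (e*f); rwa [← hx] at this
  have hefx : e * f = x := by
    have := huniq x (e*f) h3 h4
    rwa [myStarIdem star huniq hxidem] at this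
  show (e*f) * (e*f) = e*f
  rw [hefx]; exact hxidem

theorem myIdemComm
    (h1 : ∀ t : S, t * star t * t = t)
    (h2 : ∀ t : S, star t * t * star t = star t)
    (huniq : ∀ t s : S, t * s * t = t → s * t * s = s → s = star t)
    {e f : S} (he : isIdem e) (hf : isIdem f) : e * f = f * e := by
  have he2 : ∀ a : S, a * e * e = a * e := fun a => by rw [mul_assoc, he]
  have hf2 : ∀ a : S, a * f * f = a * f := fun a => by rw [mul_assoc, hf]
  have hef : isIdem (e * f) := myIdemMul star h1 h2 huniq he hf
  have hfe : isIdem (f * e) := myIdemMul star h1 h2 huniq hf he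
  have hefl : e*f*e*f = e*f := by
    calc e*f*e*f = (e*f)*(e*f) := by simp only [← mul_assoc]
      _ = e*f := hef
  have hfel : f*e*f*e = f*e := by
    calc f*e*f*e = (f*e)*(f*e) := by simp only [← mul_assoc]
      _ = f*e := hfe
  have hA : (e*f) * (f*e) * (e*f) = e*f := by
    have : (e*f) * (f*e) * (e*f) = e*f*f*e*e*f := by simp only [← mul_assoc]
    rw [this, hf2, he2, hefl]
  have hB : (f*e) * (e*f) * (f*e) = f*e := by
    have : (f*e) * (e*f) * (f*e) = f*e*e*f*f*e := by simp only [← mul_assoc]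
    rw [this, he2, hf2, hfel]
  have := huniq (e*f) (f*e) hA hB
  rw [myStarIdem star huniq hef] at this
  exact this.symm

theorem myStarMul
    (h1 : ∀ t : S, t * star t * t = t)
    (h2 : ∀ t : S, star t * t * star t = star t)
    (huniq : ∀ t s : S, t * s * t = t → s * t * s = s → s = star t)
    (t u : S) : star (t * u) = star u * star t := by
  have hI1 : isIdem (u * star u) := by
    show (u * star u) * (u * star u) = u * star u
    calc (u * star u) * (u * star u) = (u * star u * u) * star u := by simp only [← mul_assoc]
      _ = u * star u := by rw [h1 u]
  have hI2 : isIdem (star t * t) := by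
    show (star t * t) * (star t * t) = star t * t
    calc (star t * t) * (star t * t) = (star t * t * star t) * t := by simp only [← mul_assoc]
      _ = star t * t := by rw [h2 t]
  have comm := myIdemComm star h1 h2 huniq hI1 hI2
  refine (huniq (t*u) (star u * star t) ?_ ?_).symm
  · calc (t*u)*(star u*star t)*(t*u) = t*((u*star u)*(star t*t))*u := by simp only [← mul_assoc]
      _ = t*((star t*t)*(u*star u))*u := by rw [comm]
      _ = (t*star t*t)*(u*star u*u) := by simp only [← mul_assoc]
      _ = t*u := by rw [h1 t, h1 u]
  · calc (star u*star t)*(t*u)*(star u*star t)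
        = star u*((star t*t)*(u*star u))*star t := by simp only [← mul_assoc]
      _ = star u*((u*star u)*(star t*t))*star t := by rw [← comm]
      _ = (star u*u*star u)*(star t*t*star t) := by simp only [← mul_assoc]
      _ = star u * star t := by rw [h2 u, h2 t]

end auxlem

open scoped Classical in
/-- The principal character associated to an idempotent `a`. -/
noncomputable def phiP {S : Type*} [Monoid S] (a : S) : S → Bool :=
  fun s => decide (isIdem s ∧ a * s = a)

theorem phiP_eq {S : Type*} [Monoid S] {a s : S} :
    phiP a s = true ↔ (isIdem s ∧ a * s = a) := by
  simp [phiP]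

theorem phiP_char {S : Type*} [Monoid S] (star : S → S)
    (h1 : ∀ t : S, t * star t * t = t)
    (h2 : ∀ t : S, star t * t * star t = star t)
    (huniq : ∀ t s : S, t * s * t = t → s * t * s = s → s = star t)
    (z : S) (hz : ∀ t : S, z * t = z ∧ t * z = z)
    {a : S} (ha : isIdem a) (haz : a ≠ z) : IsCharOn S z (phiP a) := by
  have hone : isIdem (1 : S) := mul_one 1
  refine ⟨?_, ?_, ?_, ?_⟩
  · intro e f he hf
    have hef : isIdem (e * f) := myIdemMul star h1 h2 huniq he hf
    have comm : e * f = f * e := myIdemComm star h1 h2 huniq he hf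
    rw [Bool.eq_iff_iff, Bool.and_eq_true, phiP_eq, phiP_eq, phiP_eq]
    constructor
    · rintro ⟨-, haef⟩
      have hae : a * e = a := by
        conv_lhs => rw [← haef]
        calc a * (e * f) * e = a * (e * (f * e)) := by simp only [mul_assoc]
          _ = a * (e * (e * f)) := by rw [← comm]
          _ = a * (e * e * f) := by rw [← mul_assoc e e f]
          _ = a * (e * f) := by rw [he]
          _ = a := haef
      refine ⟨⟨he, hae⟩, hf, ?_⟩
      conv_lhs => rw [← haef]
      calc a * (e * f) * f = a * (e * (f * f)) := by simp only [mul_assoc]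
        _ = a * (e * f) := by rw [hf]
        _ = a := haef
    · rintro ⟨⟨-, hae⟩, -, haf⟩
      exact ⟨hef, by rw [← mul_assoc, hae, haf]⟩
  · exact phiP_eq.mpr ⟨hone, mul_one a⟩
  · rw [Bool.eq_false_iff]
    intro h
    have h2' := (phiP_eq.mp h).2
    rw [(hz a).2] at h2'
    exact haz h2'.symm
  · intro s hs
    rw [Bool.eq_false_iff]
    intro h
    exact hs (phiP_eq.mp h).1

theorem germRel_equiv {S : Type*} [Monoid S] (star : S → S)
    (h1 : ∀ t : S, t * star t * t = t)
    (h2 : ∀ t : S, star t * t * star t = star t)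
    (huniq : ∀ t s : S, t * s * t = t → s * t * s = s → s = star t)
    (z : S) : Equivalence (germRel S star z) := by
  constructor
  · intro p
    exact ⟨rfl, 1, mul_one 1, p.1.2.2.2.1, rfl⟩
  · rintro p q ⟨hφ, f, hfI, hff, hft⟩
    exact ⟨hφ.symm, f, hfI, by rw [← hφ]; exact hff, hft.symm⟩
  · rintro p q r ⟨hφ1, f, hfI, hff, hft⟩ ⟨hφ2, g, hgI, hgg, hgt⟩
    have comm : f * g = g * f := myIdemComm star h1 h2 huniq hfI hgI
    refine ⟨hφ1.trans hφ2, f * g, myIdemMul star h1 h2 huniq hfI hgI, ?_, ?_⟩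
    · rw [p.1.2.2.1 f g hfI hgI, hff, Bool.true_and, hφ1, hgg]
    · calc p.1.1 * (f * g) = (p.1.1 * f) * g := (mul_assoc _ _ _).symm
        _ = (q.1.1 * f) * g := by rw [hft]
        _ = q.1.1 * (f * g) := mul_assoc _ _ _
        _ = q.1.1 * (g * f) := by rw [comm]
        _ = (q.1.1 * g) * f := (mul_assoc _ _ _).symm
        _ = (r.1.1 * g) * f := by rw [hgt]
        _ = r.1.1 * (g * f) := mul_assoc _ _ _
        _ = r.1.1 * (f * g) := by rw [comm]

theorem charSpec {S : Type*} [Monoid S] {z : S} {φ ψ : CharSp S z}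
    (h : ∀ f : S, isIdem f → φ.1 f = true → ψ.1 f = true)
    {V : Set (CharSp S z)} (hV : IsOpen V) : φ ∈ V → ψ ∈ V := by
  have hV' : TopologicalSpace.GenerateOpen
      {V : Set (CharSp S z) | ∃ e : S, isIdem e ∧ V = charU z e} V := hV
  induction hV' with
  | basic U hU =>
    obtain ⟨e, heI, rfl⟩ := hU
    exact h e heI
  | univ => exact fun _ => trivial
  | inter U1 U2 hU1 hU2 ih1 ih2 => exact fun hm => ⟨ih1 hU1 hm.1, ih2 hU2 hm.2⟩
  | sUnion K hK ih => rintro ⟨U, hU, hm⟩; exact ⟨U, hU, ih U hU (hK U hU) hm⟩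

/-- The unit space is closed in the arrow space of `Ê ⋊ S` (the transformation
groupoid of the universal action of `S`) if and only if `S` is `E*`-unitary. -/
theorem stmt15 {S : Type*} [Monoid S] (star : S → S)
    (h1 : ∀ t : S, t * star t * t = t)
    (h2 : ∀ t : S, star t * t * star t = star t)
    (huniq : ∀ t s : S, t * s * t = t → s * t * s = s → s = star t)
    (z : S) (hz : ∀ t : S, z * t = z ∧ t * z = z) :
    IsClosed (unitGerms S star z) ↔
    (∀ e t : S, isIdem e → e ≠ z → (∃ g : S, isIdem g ∧ e = t * g) → isIdem t) := by
  have hequiv := germRel_equiv star h1 h2 huniq z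
  have star1 : star (1 : S) = 1 := myStarIdem star huniq (mul_one 1)
  have mkEq : ∀ p q : GermT S star z,
      Quot.mk (germRel S star z) p = Quot.mk (germRel S star z) q ↔ germRel S star z p q :=
    fun p q => ⟨fun h => hequiv.eqvGen_iff.mp (Quot.eq.mp h), fun h => Quot.sound h⟩
  have memUnit : ∀ q : GermT S star z,
      (Quot.mk (germRel S star z) q ∈ unitGerms S star z ↔
        ∃ f : S, isIdem f ∧ q.1.2.1 f = true ∧ q.1.1 * f = f) := by
    intro q
    constructor
    · rintro ⟨p, hp1, hpe⟩
      obtain ⟨hφ, f, hfI, hft, heq⟩ := (mkEq q p).mp hpe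
      exact ⟨f, hfI, hft, by rw [heq, hp1, one_mul]⟩
    · rintro ⟨f, hfI, hft, heq⟩
      refine ⟨⟨(1, q.1.2), ?_⟩, rfl, Quot.sound ⟨rfl, f, hfI, hft, by rw [heq, one_mul]⟩⟩
      show q.1.2.1 (star 1 * 1) = true
      rw [star1, one_mul]
      exact q.1.2.2.2.1
  constructor
  · -- closed → E*-unitary
    rintro hC e t he hez ⟨g, hg, heg⟩
    by_contra ht
    have hsI : isIdem (star t * t) := by
      show (star t * t) * (star t * t) = star t * t
      calc (star t * t) * (star t * t) = (star t * t * star t) * t := by simp only [← mul_assoc]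
        _ = star t * t := by rw [h2 t]
    set s := star t * t with hs_def
    have hes : e * s = e := by
      rw [heg]
      have hcm : g * s = s * g := myIdemComm star h1 h2 huniq hg hsI
      calc t * g * s = t * (g * s) := by rw [mul_assoc]
        _ = t * (s * g) := by rw [hcm]
        _ = (t * star t * t) * g := by rw [hs_def]; simp only [← mul_assoc]
        _ = t * g := by rw [h1 t]
    have hsz : s ≠ z := fun h => hez (by rw [← hes, h, (hz e).2])
    have hstar_e : star e = g * star t := by
      rw [heg, myStarMul star h1 h2 huniq, myStarIdem star huniq hg]
    have hte : t * e = e := by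
      have hee : e = star e * e := by
        rw [myStarIdem star huniq he, he]
      conv_lhs => rw [hee]
      rw [hstar_e]
      -- t * (g * star t * e) = e ; with e = t*g
      rw [heg]
      have hcm : g * s = s * g := myIdemComm star h1 h2 huniq hg hsI
      calc t * (g * star t * (t * g)) = t * (g * (star t * t)) * g := by simp only [← mul_assoc]
        _ = t * (g * s) * g := by rw [hs_def]
        _ = t * (s * g) * g := by rw [hcm]
        _ = (t * star t * t) * (g * g) := by rw [hs_def]; simp only [← mul_assoc]
        _ = t * g := by rw [h1 t, hg]
    have hchar_s : IsCharOn S z (phiP s) := phiP_char star h1 h2 huniq z hz hsI hsz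
    have hchar_e : IsCharOn S z (phiP e) := phiP_char star h1 h2 huniq z hz he hez
    let φs : CharSp S z := ⟨phiP s, hchar_s⟩
    let φe : CharSp S z := ⟨phiP e, hchar_e⟩
    have pgerm : φs.1 (star t * t) = true := phiP_eq.mpr ⟨hsI, hsI⟩
    have egerm : φe.1 (star t * t) = true := phiP_eq.mpr ⟨hsI, hes⟩
    let p : GermT S star z := ⟨(t, φs), pgerm⟩
    let q : GermT S star z := ⟨(t, φe), egerm⟩
    have hqU : Quot.mk (germRel S star z) q ∈ unitGerms S star z :=
      (memUnit q).mpr ⟨e, he, phiP_eq.mpr ⟨he, he⟩, hte⟩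
    have hpU : Quot.mk (germRel S star z) p ∉ unitGerms S star z := by
      rw [memUnit p]
      rintro ⟨f, hfI, hfs, htf⟩
      have hsf : s * f = s := (phiP_eq.mp hfs).2
      have hfs' : f * s = s := by rw [myIdemComm star h1 h2 huniq hfI hsI, hsf]
      have hts : t = s := by
        calc t = t * s := by rw [hs_def, ← mul_assoc, h1 t]
          _ = t * (f * s) := by rw [hfs']
          _ = (t * f) * s := by rw [mul_assoc]
          _ = f * s := by rw [htf]
          _ = s := hfs'
      exact ht (hts ▸ hsI)
    -- topology
    have hA : IsOpen (Quot.mk (germRel S star z) ⁻¹' (unitGerms S star z)ᶜ) :=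
      hC.isOpen_compl
    letI tS : TopologicalSpace S := ⊥
    have hA' : @IsOpen (GermT S star z)
        (TopologicalSpace.induced Subtype.val inferInstance)
        (Quot.mk (germRel S star z) ⁻¹' (unitGerms S star z)ᶜ) := hA
    obtain ⟨W, hW, hWeq⟩ := isOpen_induced_iff.mp hA'
    have hpW : ((t, φs) : S × CharSp S z) ∈ W := by
      have hpA : p ∈ Quot.mk (germRel S star z) ⁻¹' (unitGerms S star z)ᶜ := hpU
      rw [← hWeq] at hpA
      exact hpA
    obtain ⟨u, v, hu, hv, htu, hφv, huv⟩ := isOpen_prod_iff.mp hW t φs hpW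
    have hspec : φe ∈ v := by
      refine charSpec (φ := φs) (ψ := φe) ?_ hv hφv
      intro f hfI hsf
      have : s * f = s := (phiP_eq.mp hsf).2
      exact phiP_eq.mpr ⟨hfI, by rw [← hes, mul_assoc, this]⟩
    have hqW : ((t, φe) : S × CharSp S z) ∈ W := huv ⟨htu, hspec⟩
    have hqA : q ∈ Quot.mk (germRel S star z) ⁻¹' (unitGerms S star z)ᶜ := by
      rw [← hWeq]
      exact hqW
    exact hqA hqU
  · -- E*-unitary → closed
    intro hE
    refine ⟨?_⟩
    show IsOpen (Quot.mk (germRel S star z) ⁻¹' (unitGerms S star z)ᶜ)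
    have hset : Quot.mk (germRel S star z) ⁻¹' (unitGerms S star z)ᶜ
        = {q : GermT S star z | ¬ isIdem q.1.1} := by
      ext q
      show ¬ (Quot.mk (germRel S star z) q ∈ unitGerms S star z) ↔ ¬ isIdem q.1.1; rw [memUnit q]
      constructor
      · intro hno hidem
        apply hno
        have hq2 : q.1.2.1 (star q.1.1 * q.1.1) = true := q.2
        rw [myStarIdem star huniq hidem, hidem] at hq2
        exact ⟨q.1.1, hidem, hq2, hidem⟩
      · rintro hni ⟨f, hfI, hft, heq⟩
        have hfz : f ≠ z := by
          intro h
          rw [h] at hft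
          rw [q.1.2.2.2.2.1] at hft
          exact absurd hft (by simp)
        exact hni (hE f q.1.1 hfI hfz ⟨f, hfI, heq.symm⟩)
    rw [hset]
    letI tS : TopologicalSpace S := ⊥
    haveI : DiscreteTopology S := ⟨rfl⟩
    have hrect : {q : GermT S star z | ¬ isIdem q.1.1}
        = Subtype.val ⁻¹' ({u : S | ¬ isIdem u} ×ˢ (Set.univ : Set (CharSp S z))) := by
      ext q
      exact ⟨fun h => ⟨h, trivial⟩, fun h => h.1⟩
    rw [hrect]
    exact isOpen_induced ((isOpen_discrete _).prod isOpen_univ)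
end

section
/- Let A and B be C*-algebras and let 𝓗 be a Hilbert A,B-bimodule with left A-valued inner product ⟨⟨·|·⟩⟩ and right B-valued inner product ⟨·|·⟩ satisfying ζ·⟨ξ|η⟩ = ⟨⟨ζ|ξ⟩⟩·η. Let r(𝓗) ⊴ A and s(𝓗) ⊴ B be the closed ideals generated by the left and right inner products. Then for any Hilbert sub-bimodule 𝓗' ⊆ 𝓗 (a closed subspace invariant under both module actions, which is a Hilbert bimodule with the restricted inner products), one has 𝓗' = 𝓗·s(𝓗') = r(𝓗')·𝓗 (closed linear spans). -/
private lemma stmt18_key {B : Type*} [NonUnitalCStarAlgebra B] (b : B) (n : ℕ) :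
    ∃ m c : B, m = (star b * b) * c ∧ IsSelfAdjoint m ∧
      m * (star b * b) = (star b * b) * m ∧
      ‖star b * b - (star b * b) * m - m * (star b * b) + m * (star b * b) * m‖
        ≤ 1 / (n + 1) := by
  set t := star b * b with ht
  have htsa : IsSelfAdjoint t := IsSelfAdjoint.star_mul_self b
  have hsp : ∀ x ∈ quasispectrum ℝ t, 0 ≤ x := by
    rw [ht, Unitization.quasispectrum_eq_spectrum_inr' ℝ ℂ, Unitization.inr_mul,
      Unitization.inr_star]
    exact spectrum_star_mul_self_nonneg
  set N : ℝ := (n : ℝ) + 1 with hN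
  have hN0 : (0:ℝ) < N := by positivity
  set f : ℝ → ℝ := fun x => N ^ 2 * x / (1 + N * |x|) ^ 2 with hfdef
  set F : ℝ → ℝ := fun x => x * f x with hFdef
  have hfc : Continuous f := by
    apply Continuous.div (by fun_prop) (by fun_prop)
    intro x; positivity
  have hFc : Continuous F := by rw [hFdef]; fun_prop
  have hf0 : f 0 = 0 := by simp [hfdef]
  have hF0 : F 0 = 0 := by simp [hFdef, hf0]
  have hid : cfcₙ (fun x : ℝ => x) t = t := cfcₙ_id' ℝ t
  set m := cfcₙ F t with hm
  have hmt : m * t = t * m := by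
    have hc := cfcₙ_commute_cfcₙ F (fun x : ℝ => x) t
    rw [hid] at hc
    exact hc.eq
  have cont1 : Continuous (fun x : ℝ => x * F x) := by fun_prop
  have cont10 : (fun x : ℝ => x * F x) 0 = 0 := by simp
  have h1 : cfcₙ (fun x : ℝ => x * F x) t = t * m := by
    rw [cfcₙ_mul (fun x : ℝ => x) F t continuous_id.continuousOn rfl hFc.continuousOn hF0, hid]
  have h2 : cfcₙ (fun x : ℝ => x * F x * F x) t = t * m * m := by
    rw [cfcₙ_mul (fun x : ℝ => x * F x) F t cont1.continuousOn cont10 hFc.continuousOn hF0, h1]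
  have e1 : cfcₙ (fun x : ℝ => x - x * F x) t = t - t * m := by
    rw [cfcₙ_sub (fun x : ℝ => x) (fun x : ℝ => x * F x) t continuous_id.continuousOn rfl
      cont1.continuousOn cont10, hid, h1]
  have cont2 : Continuous (fun x : ℝ => x - x * F x) := by fun_prop
  have e2 : cfcₙ (fun x : ℝ => x - x * F x - x * F x) t = t - t * m - t * m := by
    rw [cfcₙ_sub (fun x : ℝ => x - x * F x) (fun x : ℝ => x * F x) t cont2.continuousOn
      (by simp) cont1.continuousOn cont10, e1, h1]
  have cont3 : Continuous (fun x : ℝ => x - x * F x - x * F x) := by fun_prop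
  have cont4 : Continuous (fun x : ℝ => x * F x * F x) := by fun_prop
  have e3 : cfcₙ (fun x : ℝ => x - x * F x - x * F x + x * F x * F x) t
      = t - t * m - t * m + t * m * m := by
    rw [cfcₙ_add (fun x : ℝ => x - x * F x - x * F x) (fun x : ℝ => x * F x * F x) t
      cont3.continuousOn (by simp) cont4.continuousOn (by simp), e2, h2]
  refine ⟨m, cfcₙ f t, ?_, cfcₙ_predicate F t, hmt, ?_⟩
  · rw [hm]
    rw [hFdef]
    rw [cfcₙ_mul (fun x : ℝ => x) f t continuous_id.continuousOn rfl hfc.continuousOn hf0]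
    rw [hid]
  · have : t - t * m - m * t + m * t * m = t - t * m - t * m + t * m * m := by
      rw [hmt]
    rw [this, ← e3]
    apply norm_cfcₙ_le
    intro x hx
    have hx0 : 0 ≤ x := hsp x hx
    have hd : (0:ℝ) < (1 + N * x) ^ 2 := by positivity
    have hFval : F x = (N * x) ^ 2 / (1 + N * x) ^ 2 := by
      rw [hFdef]; simp only [hfdef]
      rw [abs_of_nonneg hx0]
      field_simp
    have hexpr : x - x * F x - x * F x + x * F x * F x = x * (1 - F x) ^ 2 := by ring
    rw [Real.norm_eq_abs, hexpr]
    have h1F : 1 - F x = (1 + 2 * N * x) / (1 + N * x) ^ 2 := by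
      rw [hFval]; field_simp; ring
    have hnn : 0 ≤ x * (1 - F x) ^ 2 := mul_nonneg hx0 (sq_nonneg _)
    rw [abs_of_nonneg hnn, h1F, div_pow, ← mul_div_assoc,
      div_le_div_iff₀ (by positivity) hN0]
    nlinarith [mul_nonneg hN0.le hx0, sq_nonneg (N * x), sq_nonneg (N * x * (N * x)),
      mul_nonneg (mul_nonneg hN0.le hx0) (mul_nonneg hN0.le hx0)]


/-- For a Hilbert `A,B`-bimodule `H` and a Hilbert sub-bimodule `H'`, one has
`H' = H·s(H') = r(H')·H` (closed linear spans), where `s(H') ⊴ B` and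
`r(H') ⊴ A` are the closed ideals generated by the right and left inner
products of elements of `H'`. -/
theorem stmt18
    {A : Type*} [NonUnitalCStarAlgebra A]
    {B : Type*} [NonUnitalCStarAlgebra B]
    {H : Type*} [NormedAddCommGroup H] [NormedSpace ℂ H] [CompleteSpace H]
    -- the bimodule structure and the two inner products
    (actL : A → H → H) (actR : H → B → H) (ipL : H → H → A) (ipR : H → H → B)
    (haddL : ∀ (a : A) (ξ η : H), actL a (ξ + η) = actL a ξ + actL a η)
    (haddL' : ∀ (a b : A) (ξ : H), actL (a + b) ξ = actL a ξ + actL b ξ)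
    (hmulL : ∀ (a b : A) (ξ : H), actL (a * b) ξ = actL a (actL b ξ))
    (hsmulL : ∀ (c : ℂ) (a : A) (ξ : H), actL (c • a) ξ = c • actL a ξ)
    (haddR : ∀ (ξ η : H) (b : B), actR (ξ + η) b = actR ξ b + actR η b)
    (haddR' : ∀ (ξ : H) (b c : B), actR ξ (b + c) = actR ξ b + actR ξ c)
    (hmulR : ∀ (ξ : H) (b c : B), actR ξ (b * c) = actR (actR ξ b) c)
    (hsmulR : ∀ (c : ℂ) (ξ : H) (b : B), actR ξ (c • b) = c • actR ξ b)
    (hbimod : ∀ (a : A) (ξ : H) (b : B), actR (actL a ξ) b = actL a (actR ξ b))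
    -- the right (`B`-valued) inner product
    (hipRadd : ∀ ξ η ζ : H, ipR ξ (η + ζ) = ipR ξ η + ipR ξ ζ)
    (hipRstar : ∀ ξ η : H, star (ipR ξ η) = ipR η ξ)
    (hipRmod : ∀ (ξ η : H) (b : B), ipR ξ (actR η b) = ipR ξ η * b)
    (hipRleft : ∀ (a : A) (ξ η : H), ipR (actL a ξ) η = ipR ξ (actL (star a) η))
    (hipRnorm : ∀ ξ : H, ‖ipR ξ ξ‖ = ‖ξ‖ ^ 2)
    (hipRpos : ∀ ξ : H, ∃ b : B, ipR ξ ξ = star b * b)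
    -- the left (`A`-valued) inner product
    (hipLadd : ∀ ξ η ζ : H, ipL (ξ + η) ζ = ipL ξ ζ + ipL η ζ)
    (hipLstar : ∀ ξ η : H, star (ipL ξ η) = ipL η ξ)
    (hipLmod : ∀ (a : A) (ξ η : H), ipL (actL a ξ) η = a * ipL ξ η)
    (hipLright : ∀ (ξ η : H) (b : B), ipL (actR ξ b) η = ipL ξ (actR η (star b)))
    (hipLnorm : ∀ ξ : H, ‖ipL ξ ξ‖ = ‖ξ‖ ^ 2)
    (hipLpos : ∀ ξ : H, ∃ a : A, ipL ξ ξ = star a * a)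
    -- compatibility of the two inner products: `ζ·⟨ξ|η⟩ = ⟨⟨ζ|ξ⟩⟩·η`
    (hlink : ∀ ζ ξ η : H, actR ζ (ipR ξ η) = actL (ipL ζ ξ) η)
    -- a Hilbert sub-bimodule `H'`
    (H' : Submodule ℂ H) (hH'c : IsClosed (H' : Set H))
    (hH'L : ∀ a : A, ∀ ξ ∈ H', actL a ξ ∈ H')
    (hH'R : ∀ ξ ∈ H', ∀ b : B, actR ξ b ∈ H')
    -- `s(H') ⊴ B`: the closed ideal generated by the right inner products of `H'`
    (sH' : Submodule ℂ B) (hsc : IsClosed (sH' : Set B))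
    (hsIdeal : ∀ x ∈ sH', ∀ b : B, x * b ∈ sH' ∧ b * x ∈ sH')
    (hsContains : ∀ ξ ∈ H', ∀ η ∈ H', ipR ξ η ∈ sH')
    (hsMin : ∀ K : Submodule ℂ B, IsClosed (K : Set B) →
      (∀ x ∈ K, ∀ b : B, x * b ∈ K ∧ b * x ∈ K) →
      (∀ ξ ∈ H', ∀ η ∈ H', ipR ξ η ∈ K) → sH' ≤ K)
    -- `r(H') ⊴ A`: the closed ideal generated by the left inner products of `H'`
    (rH' : Submodule ℂ A) (hrc : IsClosed (rH' : Set A))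
    (hrIdeal : ∀ x ∈ rH', ∀ a : A, x * a ∈ rH' ∧ a * x ∈ rH')
    (hrContains : ∀ ξ ∈ H', ∀ η ∈ H', ipL ξ η ∈ rH')
    (hrMin : ∀ K : Submodule ℂ A, IsClosed (K : Set A) →
      (∀ x ∈ K, ∀ a : A, x * a ∈ K ∧ a * x ∈ K) →
      (∀ ξ ∈ H', ∀ η ∈ H', ipL ξ η ∈ K) → rH' ≤ K) :
    H' = (Submodule.span ℂ {x : H | ∃ ξ : H, ∃ b ∈ sH', x = actR ξ b}).topologicalClosure ∧
    H' = (Submodule.span ℂ {x : H | ∃ a ∈ rH', ∃ ξ : H, x = actL a ξ}).topologicalClosure := by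
  
  -- derived facts for `ipR`
  have hR0 : ∀ x : H, ipR x 0 = 0 := by
    intro x
    have h := hipRadd x 0 0
    rw [add_zero] at h
    exact (left_eq_add.mp h)
  have hRsub : ∀ x η ζ : H, ipR x (η - ζ) = ipR x η - ipR x ζ := by
    intro x η ζ
    have h := hipRadd x (η - ζ) ζ
    rw [sub_add_cancel] at h
    exact eq_sub_of_add_eq h.symm
  have hRsub' : ∀ η ζ x : H, ipR (η - ζ) x = ipR η x - ipR ζ x := by
    intro η ζ x
    rw [← hipRstar x, hRsub, star_sub, hipRstar, hipRstar]
  have hipRmod' : ∀ (ξ η : H) (b : B), ipR (actR ξ b) η = star b * ipR ξ η := by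
    intro ξ η b
    rw [← hipRstar, hipRmod, star_mul, hipRstar]
  -- derived facts for `ipL`
  have hL0 : ∀ x : H, ipL 0 x = 0 := by
    intro x
    have h := hipLadd 0 0 x
    rw [add_zero] at h
    exact (left_eq_add.mp h)
  have hLsub : ∀ η ζ x : H, ipL (η - ζ) x = ipL η x - ipL ζ x := by
    intro η ζ x
    have h := hipLadd (η - ζ) ζ x
    rw [sub_add_cancel] at h
    exact eq_sub_of_add_eq h.symm
  have hLsub' : ∀ x η ζ : H, ipL x (η - ζ) = ipL x η - ipL x ζ := by
    intro x η ζ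
    rw [← hipLstar _ x, hLsub, star_sub, hipLstar, hipLstar]
  have hipLmod' : ∀ (a : A) (ξ η : H), ipL ξ (actL a η) = ipL ξ η * star a := by
    intro a ξ η
    rw [← hipLstar, hipLmod, star_mul, hipLstar]
  -- boundedness and continuity of the module actions
  have hboundR : ∀ (ζ : H) (b : B), ‖actR ζ b‖ ≤ ‖ζ‖ * ‖b‖ := by
    intro ζ b
    have h1 : ipR (actR ζ b) (actR ζ b) = star b * ipR ζ ζ * b := by
      rw [hipRmod, hipRmod']
    have h2 : ‖actR ζ b‖ ^ 2 = ‖star b * ipR ζ ζ * b‖ := by rw [← hipRnorm, h1]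
    have h3 : ‖star b * ipR ζ ζ * b‖ ≤ ‖b‖ * ‖ζ‖ ^ 2 * ‖b‖ := by
      calc ‖star b * ipR ζ ζ * b‖ ≤ ‖star b * ipR ζ ζ‖ * ‖b‖ := norm_mul_le _ _
        _ ≤ ‖star b‖ * ‖ipR ζ ζ‖ * ‖b‖ := by
            gcongr; exact norm_mul_le _ _
        _ = ‖b‖ * ‖ζ‖ ^ 2 * ‖b‖ := by rw [norm_star, hipRnorm]
    nlinarith [norm_nonneg (actR ζ b), norm_nonneg ζ, norm_nonneg b,
      mul_nonneg (norm_nonneg ζ) (norm_nonneg b)]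
  have hboundL : ∀ (ξ : H) (a : A), ‖actL a ξ‖ ≤ ‖ξ‖ * ‖a‖ := by
    intro ξ a
    have h1 : ipL (actL a ξ) (actL a ξ) = a * ipL ξ ξ * star a := by
      rw [hipLmod, hipLmod', mul_assoc]
    have h2 : ‖actL a ξ‖ ^ 2 = ‖a * ipL ξ ξ * star a‖ := by rw [← hipLnorm, h1]
    have h3 : ‖a * ipL ξ ξ * star a‖ ≤ ‖a‖ * ‖ξ‖ ^ 2 * ‖a‖ := by
      calc ‖a * ipL ξ ξ * star a‖ ≤ ‖a * ipL ξ ξ‖ * ‖star a‖ := norm_mul_le _ _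
        _ ≤ ‖a‖ * ‖ipL ξ ξ‖ * ‖star a‖ := by
            gcongr; exact norm_mul_le _ _
        _ = ‖a‖ * ‖ξ‖ ^ 2 * ‖a‖ := by rw [norm_star, hipLnorm]
    nlinarith [norm_nonneg (actL a ξ), norm_nonneg ξ, norm_nonneg a,
      mul_nonneg (norm_nonneg ξ) (norm_nonneg a)]
  have hcontR : ∀ ζ : H, Continuous (fun b : B => actR ζ b) := by
    intro ζ
    let L : B →ₗ[ℂ] H :=
      { toFun := fun b => actR ζ b
        map_add' := haddR' ζ
        map_smul' := fun c x => hsmulR c ζ x }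
    exact (L.mkContinuous ‖ζ‖ (fun b => hboundR ζ b)).continuous
  have hcontL : ∀ ξ : H, Continuous (fun a : A => actL a ξ) := by
    intro ξ
    let L : A →ₗ[ℂ] H :=
      { toFun := fun a => actL a ξ
        map_add' := fun a a' => haddL' a a' ξ
        map_smul' := fun c a => hsmulL c a ξ }
    exact (L.mkContinuous ‖ξ‖ (fun a => hboundL ξ a)).continuous
  have hactR0 : ∀ ζ : H, actR ζ 0 = 0 := by
    intro ζ
    have h := haddR' ζ 0 0
    rw [add_zero] at h
    exact (left_eq_add.mp h)
  have hactL0 : ∀ ξ : H, actL 0 ξ = 0 := by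
    intro ξ
    have h := haddL' 0 0 ξ
    rw [add_zero] at h
    exact (left_eq_add.mp h)
  -- every element of `sH'` acts into `H'`
  have hKmemR : ∀ b ∈ sH', ∀ ζ : H, actR ζ b ∈ H' := by
    have hK : sH' ≤
        { carrier := {b : B | ∀ ζ : H, actR ζ b ∈ H'}
          add_mem' := by
            intro x y hx hy ζ
            rw [haddR']
            exact H'.add_mem (hx ζ) (hy ζ)
          zero_mem' := by
            intro ζ
            rw [hactR0]
            exact H'.zero_mem
          smul_mem' := by
            intro c x hx ζ
            rw [hsmulR]
            exact H'.smul_mem c (hx ζ) } := by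
      apply hsMin
      · have : ({b : B | ∀ ζ : H, actR ζ b ∈ H'} : Set B)
            = ⋂ ζ : H, (fun b => actR ζ b) ⁻¹' (H' : Set H) := by
          ext x; simp [Set.mem_iInter]
        rw [Submodule.coe_set_mk, AddSubmonoid.coe_set_mk, AddSubsemigroup.coe_set_mk, this]
        exact isClosed_iInter fun ζ => hH'c.preimage (hcontR ζ)
      · intro x hx b
        constructor
        · intro ζ
          rw [hmulR]
          exact hH'R _ (hx ζ) b
        · intro ζ
          rw [hmulR]
          exact hx (actR ζ b)
      · intro ξ hξ η hη ζ
        rw [hlink]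
        exact hH'L _ η hη
    exact fun b hb ζ => hK hb ζ
  -- every element of `rH'` acts into `H'`
  have hKmemL : ∀ a ∈ rH', ∀ ξ : H, actL a ξ ∈ H' := by
    have hK : rH' ≤
        { carrier := {a : A | ∀ ξ : H, actL a ξ ∈ H'}
          add_mem' := by
            intro x y hx hy ξ
            rw [haddL']
            exact H'.add_mem (hx ξ) (hy ξ)
          zero_mem' := by
            intro ξ
            rw [hactL0]
            exact H'.zero_mem
          smul_mem' := by
            intro c x hx ξ
            rw [hsmulL]
            exact H'.smul_mem c (hx ξ) } := by
      apply hrMin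
      · have : ({a : A | ∀ ξ : H, actL a ξ ∈ H'} : Set A)
            = ⋂ ξ : H, (fun a => actL a ξ) ⁻¹' (H' : Set H) := by
          ext x; simp [Set.mem_iInter]
        rw [Submodule.coe_set_mk, AddSubmonoid.coe_set_mk, AddSubsemigroup.coe_set_mk, this]
        exact isClosed_iInter fun ξ => hH'c.preimage (hcontL ξ)
      · intro x hx a
        constructor
        · intro ξ
          rw [hmulL]
          exact hx (actL a ξ)
        · intro ξ
          rw [hmulL]
          exact hH'L a _ (hx ξ)
      · intro ξ hξ η hη ζ
        rw [← hlink]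
        exact hH'R _ hξ _
    exact fun a ha ξ => hK ha ξ
  constructor
  · apply le_antisymm
    · -- `H' ⊆ closure (span SR)`
      intro ξ hξ
      have hset : ((Submodule.span ℂ {x : H | ∃ ξ : H, ∃ b ∈ sH', x = actR ξ b}).topologicalClosure : Set H)
          = closure (Submodule.span ℂ {x : H | ∃ ξ : H, ∃ b ∈ sH', x = actR ξ b} : Set H) :=
        Submodule.topologicalClosure_coe _
      rw [← SetLike.mem_coe, hset, Metric.mem_closure_iff]
      intro ε hε
      obtain ⟨n, hn⟩ := exists_nat_one_div_lt (show (0:ℝ) < ε ^ 2 by positivity)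
      obtain ⟨b₀, hb₀⟩ := hipRpos ξ
      obtain ⟨m, c, hmc, hmsa, hcomm, hnorm⟩ := stmt18_key b₀ n
      rw [← hb₀] at hmc hcomm hnorm
      have htmem : ipR ξ ξ ∈ sH' := hsContains ξ hξ ξ hξ
      have hmmem : m ∈ sH' := hmc ▸ (hsIdeal _ htmem c).1
      refine ⟨actR ξ m, Submodule.subset_span ⟨ξ, m, hmmem, rfl⟩, ?_⟩
      rw [dist_eq_norm]
      have hip : ipR (ξ - actR ξ m) (ξ - actR ξ m)
          = ipR ξ ξ - ipR ξ ξ * m - m * ipR ξ ξ + m * ipR ξ ξ * m := by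
        rw [hRsub, hRsub', hRsub', hipRmod, hipRmod, hipRmod', hmsa.star_eq]
        abel
      have h2 : ‖ξ - actR ξ m‖ ^ 2 ≤ 1 / ((n : ℝ) + 1) := by
        rw [← hipRnorm, hip]
        exact hnorm
      nlinarith [norm_nonneg (ξ - actR ξ m)]
    · -- `closure (span SR) ⊆ H'`
      apply Submodule.topologicalClosure_minimal _ _ hH'c
      rw [Submodule.span_le]
      rintro x ⟨ζ, b, hb, rfl⟩
      exact hKmemR b hb ζ
  · apply le_antisymm
    · -- `H' ⊆ closure (span SL)`
      intro ξ hξ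
      have hset : ((Submodule.span ℂ {x : H | ∃ a ∈ rH', ∃ ξ : H, x = actL a ξ}).topologicalClosure : Set H)
          = closure (Submodule.span ℂ {x : H | ∃ a ∈ rH', ∃ ξ : H, x = actL a ξ} : Set H) :=
        Submodule.topologicalClosure_coe _
      rw [← SetLike.mem_coe, hset, Metric.mem_closure_iff]
      intro ε hε
      obtain ⟨n, hn⟩ := exists_nat_one_div_lt (show (0:ℝ) < ε ^ 2 by positivity)
      obtain ⟨a₀, ha₀⟩ := hipLpos ξ
      obtain ⟨m, c, hmc, hmsa, hcomm, hnorm⟩ := stmt18_key a₀ n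
      rw [← ha₀] at hmc hcomm hnorm
      have htmem : ipL ξ ξ ∈ rH' := hrContains ξ hξ ξ hξ
      have hmmem : m ∈ rH' := hmc ▸ (hrIdeal _ htmem c).1
      refine ⟨actL m ξ, Submodule.subset_span ⟨m, hmmem, ξ, rfl⟩, ?_⟩
      rw [dist_eq_norm]
      have hip : ipL (ξ - actL m ξ) (ξ - actL m ξ)
          = ipL ξ ξ - ipL ξ ξ * m - m * ipL ξ ξ + m * ipL ξ ξ * m := by
        rw [hLsub, hLsub', hLsub', hipLmod, hipLmod, hipLmod', hmsa.star_eq]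
        simp only [← mul_assoc]
        abel
      have h2 : ‖ξ - actL m ξ‖ ^ 2 ≤ 1 / ((n : ℝ) + 1) := by
        rw [← hipLnorm, hip]
        exact hnorm
      nlinarith [norm_nonneg (ξ - actL m ξ)]
    · -- `closure (span SL) ⊆ H'`
      apply Submodule.topologicalClosure_minimal _ _ hH'c
      rw [Submodule.span_le]
      rintro x ⟨a, ha, ζ, rfl⟩
      exact hKmemL a ha ζ
end
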